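/- Let X be a metric space and Y ⊆ X an α-contracting closed set. For every subset Z ⊆ X, the diameter of the nearest-point projection π_Y(Z) satisfies diam(π_Y(Z)) ≤ diam(Z) + 4α. -/

import Mathlib

open Metric Set MeasureTheory

variable {X : Type*} [MetricSpace X]

/-- A map `γ` is a geodesic on the parameter set `s`. -/
def IsGeodesicOn (γ : ℝ → X) (s : Set ℝ) : Prop :=
  ∀ t ∈ s, ∀ t' ∈ s, dist (γ t) (γ t') = |t - t'|

/-- The set of nearest-point projections of points of `Z` onto `Y`. -/
def projSet (Y Z : Set X) : Set X :=
  {y | y ∈ Y ∧ ∃ z ∈ Z, dist z y = Metric.infDist z Y}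

/-- `Y` is an `α`-contracting closed subset: any geodesic at distance `≥ α` from `Y`
has projection onto `Y` of diameter `≤ α`. -/
def IsContractingSet (α : ℝ) (Y : Set X) : Prop :=
  IsClosed Y ∧ ∀ (γ : ℝ → X) (s : Set ℝ), IsGeodesicOn γ s →
    (∀ t ∈ s, α ≤ Metric.infDist (γ t) Y) →
    Metric.diam (projSet Y (γ '' s)) ≤ α

/-- `X` is a geodesic space: any two points are joined by a geodesic. -/
def GeodesicSpace (X : Type*) [MetricSpace X] : Prop :=
  ∀ x y : X, ∃ γ : ℝ → X, γ 0 = x ∧ γ (dist x y) = y ∧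
    IsGeodesicOn γ (Set.Icc 0 (dist x y))

/-!
Let `p, q` be nearest points of `z, w` and `γ` a geodesic from `z` to `w`. If `γ` stays
`α`-far from `Y`, contraction gives `dist p q ≤ α`. Otherwise let `γ t₁` be the first point
of `γ` in the closed `α`-neighbourhood of `Y`: contraction of `γ` on `[0, t₁]` puts `p`
within `α` of a nearest point of `γ t₁`, hence `dist p (γ t₁) ≤ 2α`. Running `γ` backwards
gives a point `γ t₂` with `dist q (γ t₂) ≤ 2α`, and `dist (γ t₁) (γ t₂) ≤ dist z w`.
-/

theorem ContinuousOn.exists_first_le {f : ℝ → ℝ} {a b c : ℝ} (hf : ContinuousOn f (Icc a b))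
    (ha : c ≤ f a) (h : ∃ t ∈ Icc a b, f t ≤ c) :
    ∃ t₁ ∈ Icc a b, f t₁ ≤ c ∧ ∀ t ∈ Icc a t₁, c ≤ f t := by
  set A := Icc a b ∩ f ⁻¹' Iic c
  have hA : IsClosed A := hf.preimage_isClosed_of_isClosed isClosed_Icc isClosed_Iic
  have ht₁ : sInf A ∈ A := hA.csInf_mem h ⟨a, fun t ht => ht.1.1⟩
  have hbefore : ∀ t ∈ Ico a (sInf A), c ≤ f t := fun t ht => by
    by_contra! hlt
    have htA : t ∈ A := ⟨⟨ht.1, ht.2.le.trans ht₁.1.2⟩, hlt.le⟩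
    exact (csInf_le ⟨a, fun s hs => hs.1.1⟩ htA).not_gt ht.2
  have hat₁ : c ≤ f (sInf A) := by
    rcases ht₁.1.1.eq_or_lt with heq | hlt
    · rwa [← heq]
    have hC : IsClosed (Icc a b ∩ f ⁻¹' Ici c) :=
      hf.preimage_isClosed_of_isClosed isClosed_Icc isClosed_Ici
    have hsub : Ico a (sInf A) ⊆ Icc a b ∩ f ⁻¹' Ici c := fun s hs =>
      ⟨⟨hs.1, hs.2.le.trans ht₁.1.2⟩, hbefore s hs⟩
    have hmem : sInf A ∈ closure (Ico a (sInf A)) := by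
      rw [closure_Ico hlt.ne]
      exact right_mem_Icc.2 hlt.le
    exact (hC.closure_subset_iff.2 hsub hmem).2
  refine ⟨sInf A, ht₁.1, ht₁.2, fun t ht => ?_⟩
  rcases ht.2.lt_or_eq with hlt | heq
  · exact hbefore t ⟨ht.1, hlt⟩
  · rwa [heq]

namespace IsGeodesicOn

variable {γ : ℝ → X} {s : Set ℝ}

theorem mono {s' : Set ℝ} (hγ : IsGeodesicOn γ s) (hs' : s' ⊆ s) : IsGeodesicOn γ s' :=
  fun t ht t' ht' => hγ t (hs' ht) t' (hs' ht')

theorem comp_const_sub (hγ : IsGeodesicOn γ s) (c : ℝ) :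
    IsGeodesicOn (fun t => γ (c - t)) ((c - ·) ⁻¹' s) := fun t ht t' ht' => by
  rw [hγ _ ht _ ht', ← abs_neg]
  ring_nf

theorem lipschitzOnWith (hγ : IsGeodesicOn γ s) : LipschitzOnWith 1 γ s :=
  LipschitzOnWith.of_dist_le_mul fun t ht t' ht' => by
    rw [hγ t ht t' ht', NNReal.coe_one, one_mul, Real.dist_eq]

theorem isBounded_image (hγ : IsGeodesicOn γ s) (hs : Bornology.IsBounded s) :
    Bornology.IsBounded (γ '' s) := by
  obtain ⟨C, hC⟩ := isBounded_iff.1 hs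
  refine isBounded_iff.2 ⟨C, forall_mem_image.2 fun t ht => forall_mem_image.2 fun t' ht' => ?_⟩
  rw [hγ t ht t' ht', ← Real.dist_eq]
  exact hC ht ht'

end IsGeodesicOn

theorem Bornology.IsBounded.projSet {Y Z : Set X} (hZ : Bornology.IsBounded Z) :
    Bornology.IsBounded (_root_.projSet Y Z) := by
  rcases (_root_.projSet Y Z).eq_empty_or_nonempty with h | ⟨p₀, hp₀Y, -⟩
  · simp [h]
  obtain ⟨r, hr⟩ := hZ.subset_closedBall p₀
  refine (isBounded_closedBall (x := p₀) (r := 2 * r)).subset ?_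
  rintro y ⟨-, z, hz, hzy⟩
  have hyz : dist y z ≤ dist z p₀ := by
    rw [dist_comm, hzy]
    exact infDist_le_dist_of_mem hp₀Y
  have hzp₀ : dist z p₀ ≤ r := hr hz
  calc dist y p₀ ≤ dist y z + dist z p₀ := dist_triangle _ _ _
    _ ≤ 2 * r := by linarith

namespace IsContractingSet

variable {α : ℝ} {Y : Set X} {γ : ℝ → X} {s : Set ℝ}

theorem dist_le_of_far (hY : IsContractingSet α Y) (hγ : IsGeodesicOn γ s)
    (hs : Bornology.IsBounded s) (hfar : ∀ t ∈ s, α ≤ infDist (γ t) Y) {p q : X}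
    (hp : p ∈ projSet Y (γ '' s)) (hq : q ∈ projSet Y (γ '' s)) : dist p q ≤ α :=
  (dist_le_diam_of_mem (hγ.isBounded_image hs).projSet hp hq).trans (hY.2 γ s hγ hfar)

theorem dist_le_add_infDist_of_far [ProperSpace X] (hY : IsContractingSet α Y)
    (hγ : IsGeodesicOn γ s) (hs : Bornology.IsBounded s) (hfar : ∀ t ∈ s, α ≤ infDist (γ t) Y)
    {p : X} (hp : p ∈ projSet Y (γ '' s)) {t : ℝ} (ht : t ∈ s) :
    dist p (γ t) ≤ α + infDist (γ t) Y := by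
  obtain ⟨y, hyY, hy⟩ := hY.1.exists_infDist_eq_dist ⟨p, hp.1⟩ (γ t)
  have hpy : dist p y ≤ α :=
    hY.dist_le_of_far hγ hs hfar hp ⟨hyY, γ t, mem_image_of_mem γ ht, hy.symm⟩
  calc dist p (γ t) ≤ dist p y + dist y (γ t) := dist_triangle _ _ _
    _ ≤ α + infDist (γ t) Y := by rw [dist_comm y, ← hy]; linarith

theorem exists_dist_le_two_mul [ProperSpace X] (hY : IsContractingSet α Y) {d : ℝ}
    (hγ : IsGeodesicOn γ (Icc 0 d)) (hnear : ∃ t ∈ Icc 0 d, infDist (γ t) Y ≤ α)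
    {p : X} (hpY : p ∈ Y) (hp : dist (γ 0) p = infDist (γ 0) Y) :
    ∃ t ∈ Icc 0 d, dist p (γ t) ≤ 2 * α := by
  have hd : 0 ∈ Icc 0 d := let ⟨_, ht, _⟩ := hnear; left_mem_Icc.2 (ht.1.trans ht.2)
  rcases le_or_gt (infDist (γ 0) Y) α with h0 | h0
  · refine ⟨0, hd, ?_⟩
    rw [dist_comm, hp]
    linarith [infDist_nonneg (x := γ 0) (s := Y)]
  have hf : ContinuousOn (fun t => infDist (γ t) Y) (Icc 0 d) :=
    ((lipschitz_infDist_pt Y).comp_lipschitzOnWith hγ.lipschitzOnWith).continuousOn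
  obtain ⟨t₁, ht₁, hnear₁, hfar⟩ := hf.exists_first_le h0.le hnear
  refine ⟨t₁, ht₁, ?_⟩
  have hp' : p ∈ projSet Y (γ '' Icc 0 t₁) :=
    ⟨hpY, γ 0, mem_image_of_mem γ (left_mem_Icc.2 ht₁.1), hp⟩
  have := hY.dist_le_add_infDist_of_far (hγ.mono (Icc_subset_Icc_right ht₁.2))
    (isBounded_Icc 0 t₁) hfar hp' (right_mem_Icc.2 ht₁.1)
  linarith

theorem dist_le_dist_add [ProperSpace X] (hX : GeodesicSpace X) (hY : IsContractingSet α Y)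
    {z w p q : X} (hpY : p ∈ Y) (hp : dist z p = infDist z Y)
    (hqY : q ∈ Y) (hq : dist w q = infDist w Y) :
    dist p q ≤ dist z w + 4 * α := by
  obtain ⟨γ, hγ0, hγd, hγ⟩ := hX z w
  set d := dist z w
  have hd : 0 ≤ d := dist_nonneg
  rw [← hγ0] at hp
  rw [← hγd] at hq
  by_cases hfar : ∀ t ∈ Icc 0 d, α ≤ infDist (γ t) Y
  · have := hY.dist_le_of_far hγ (isBounded_Icc 0 d) hfar
      ⟨hpY, γ 0, mem_image_of_mem γ (left_mem_Icc.2 hd), hp⟩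
      ⟨hqY, γ d, mem_image_of_mem γ (right_mem_Icc.2 hd), hq⟩
    linarith [dist_nonneg (x := p) (y := q)]
  push Not at hfar
  obtain ⟨t, ht, hnear⟩ := hfar
  have hrev : IsGeodesicOn (fun t => γ (d - t)) (Icc 0 d) := by
    simpa using hγ.comp_const_sub d
  obtain ⟨t₁, ht₁, hpt₁⟩ := hY.exists_dist_le_two_mul hγ ⟨t, ht, hnear.le⟩ hpY hp
  obtain ⟨t₂, ht₂, hqt₂⟩ := hY.exists_dist_le_two_mul hrev
    ⟨d - t, ⟨by linarith [ht.2], by linarith [ht.1]⟩, by simpa using hnear.le⟩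
    hqY (by simpa using hq)
  have ht₂' : d - t₂ ∈ Icc 0 d := ⟨by linarith [ht₂.2], by linarith [ht₂.1]⟩
  have hmid : dist (γ t₁) (γ (d - t₂)) ≤ d := by
    simpa [hγ _ ht₁ _ ht₂', ← Real.dist_eq] using Real.dist_le_of_mem_Icc ht₁ ht₂'
  calc dist p q ≤ dist p (γ t₁) + dist (γ t₁) (γ (d - t₂)) + dist (γ (d - t₂)) q :=
        dist_triangle4 _ _ _ _
    _ ≤ d + 4 * α := by rw [dist_comm _ q]; linarith

end IsContractingSet

theorem projection_diam_le_general [ProperSpace X] (hX : GeodesicSpace X)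
    {α : ℝ} {Y : Set X} (hY : IsContractingSet α Y) (Z : Set X) :
    EMetric.diam (projSet Y Z) ≤ EMetric.diam Z + ENNReal.ofReal (4 * α) := by
  refine Metric.ediam_le fun p ⟨hpY, z, hz, hp⟩ q ⟨hqY, w, hw, hq⟩ => ?_
  calc edist p q = ENNReal.ofReal (dist p q) := edist_dist p q
    _ ≤ ENNReal.ofReal (dist z w + 4 * α) :=
        ENNReal.ofReal_le_ofReal (hY.dist_le_dist_add hX hpY hp hqY hq)
    _ ≤ ENNReal.ofReal (dist z w) + ENNReal.ofReal (4 * α) := ENNReal.ofReal_add_le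
    _ ≤ EMetric.diam Z + ENNReal.ofReal (4 * α) := by
        rw [← edist_dist]
        gcongr
        exact Metric.edist_le_ediam_of_mem hz hw

/-- The nearest point projection onto an `α`-contracting set is large-scale 1-Lipschitz:
`diam (π_Y(Z)) ≤ diam Z + 4α`. -/
theorem projection_diam_le [ProperSpace X] (hX : GeodesicSpace X)
    {α : ℝ} (hα : 0 < α) {Y : Set X} (hY : IsContractingSet α Y) (Z : Set X) :
    EMetric.diam (projSet Y Z) ≤ EMetric.diam Z + ENNReal.ofReal (4 * α) :=
  projection_diam_le_general hX hY Z
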